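/- Let u0, u1, u2 > 0 and u3 ∈ ℝ, and suppose the quadratic q(c) = u1 c² + 2 u2 c + u3 is nonnegative for all c ∈ [-1,1] and its discriminant 4(u2² − u1 u3) is positive. Then both roots of q are ≤ −1, q is strictly increasing on [-1,1], and f2(c) = 1 + u0·c + √(q(c)) attains its maximum on [-1,1] only at c = 1. -/

import Mathlib

/-!
The vertex `-u₂/u₁` of `q` lies left of `0`, and there `q` takes the negative value
`u₃ - u₂²/u₁` because the discriminant is positive. Nonnegativity of `q` on `[-1, 1]` therefore
pushes the vertex left of `-1`, so `q` is strictly increasing on `[-1, ∞)`. This gives all three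
claims: a root `r > -1` would force `q (-1) < q r = 0`, and on `[-1, 1]` both `c ↦ u₀ c` and
`c ↦ √(q c)` are maximal at `c = 1`, the first strictly.
-/

open Real Set

section Quadratic

variable {a b k : ℝ}

theorem strictMonoOn_quadratic_Ici_vertex (ha : 0 < a) :
    StrictMonoOn (fun c => a * c ^ 2 + 2 * b * c + k) (Ici (-b / a)) := by
  intro x hx y hy hxy
  have hax : -b ≤ a * x := by rwa [mem_Ici, div_le_iff₀ ha, mul_comm] at hx
  have hay : -b ≤ a * y := by rwa [mem_Ici, div_le_iff₀ ha, mul_comm] at hy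
  have hslope : 0 < a * (x + y) + 2 * b := by nlinarith
  have hdiff : (a * y ^ 2 + 2 * b * y + k) - (a * x ^ 2 + 2 * b * x + k)
      = (y - x) * (a * (x + y) + 2 * b) := by ring
  have : 0 < (y - x) * (a * (x + y) + 2 * b) := mul_pos (sub_pos.mpr hxy) hslope
  simp only
  linarith

theorem quadratic_at_vertex_neg (ha : 0 < a) (hdisc : a * k < b ^ 2) :
    a * (-b / a) ^ 2 + 2 * b * (-b / a) + k < 0 := by
  have hvertex : a * (-b / a) ^ 2 + 2 * b * (-b / a) + k = (a * k - b ^ 2) / a := by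
    field_simp
    ring
  rw [hvertex]
  exact div_neg_of_neg_of_pos (by linarith) ha

theorem vertex_lt_neg_one_of_nonneg_on_Icc (ha : 0 < a) (hb : 0 ≤ b) (hdisc : a * k < b ^ 2)
    (hq : ∀ c ∈ Icc (-1 : ℝ) 1, 0 ≤ a * c ^ 2 + 2 * b * c + k) :
    -b / a < -1 := by
  by_contra! hle
  have hvertex_nonpos : -b / a ≤ 0 := div_nonpos_of_nonpos_of_nonneg (by linarith) ha.le
  have := hq _ ⟨hle, by linarith⟩
  linarith [quadratic_at_vertex_neg ha hdisc]

end Quadratic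

theorem stmt6 (u0 u1 u2 u3 : ℝ) (h0 : 0 < u0) (h1 : 0 < u1) (h2 : 0 < u2)
    (hq : ∀ c ∈ Set.Icc (-1:ℝ) 1, 0 ≤ u1 * c^2 + 2 * u2 * c + u3)
    (hd : 0 < 4 * (u2^2 - u1 * u3)) :
    let q : ℝ → ℝ := fun c => u1 * c^2 + 2 * u2 * c + u3
    let f2 : ℝ → ℝ := fun c => 1 + u0 * c + Real.sqrt (q c)
    ((∀ r : ℝ, q r = 0 → r ≤ -1) ∧
      StrictMonoOn q (Set.Icc (-1:ℝ) 1) ∧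
      (∀ c ∈ Set.Icc (-1:ℝ) 1, c ≠ 1 → f2 c < f2 1)) := by
  intro q f2
  have hvertex := vertex_lt_neg_one_of_nonneg_on_Icc h1 h2.le (by linarith) hq
  have hmono : StrictMonoOn q (Ici (-1)) :=
    (strictMonoOn_quadratic_Ici_vertex h1).mono (Ici_subset_Ici.mpr hvertex.le)
  refine ⟨fun r hr => ?_, hmono.mono Icc_subset_Ici_self, fun c hc hc1 => ?_⟩
  · by_contra! hr_gt
    have := hmono self_mem_Ici hr_gt.le hr_gt
    linarith [hq (-1) (left_mem_Icc.mpr (by norm_num))]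
  · have hc_lt : c < 1 := lt_of_le_of_ne hc.2 hc1
    have hqc : q c ≤ q 1 := (hmono hc.1 (by norm_num) hc_lt).le
    have hsqrt : √(q c) ≤ √(q 1) := Real.sqrt_le_sqrt hqc
    have hlin : u0 * c < u0 * 1 := mul_lt_mul_of_pos_left hc_lt h0
    simp only [f2]
    linarith
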